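/- arXiv:1410.7075 — 2 statements merged into one kernel-verified Lean document; each statement's English description precedes it below -/
import Mathlib

section
/- Let 0 < p < 1 and let Φ : ℕ → [0, ∞) be any nondecreasing, nonnegative function satisfying limsup_{n→∞} n^{1/p−1}/Φ(n) = ∞. Then there exists a martingale f₀ = (f₀^{(n)})_{n≥0} belonging to the martingale Hardy space H_p(G_m) such that limsup_{n→∞} |f̂₀(n)|/Φ(n) = ∞. -/
open MeasureTheory Filter ENNReal Finset

noncomputable section

/-- The Vilenkin group `G_m`: complete direct product of cyclic groups `ℤ_{m_k}`. -/
abbrev Gm (m : ℕ → ℕ) : Type := ∀ k : ℕ, ZMod (m k)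

/-- The generalized powers `M_0 = 1`, `M_{k+1} = m_k M_k`. -/
def Mgen (m : ℕ → ℕ) : ℕ → ℕ
  | 0 => 1
  | k + 1 => m k * Mgen m k

/-- The digits of `n` in the generalized number system `n = Σ_j n_j M_j`. -/
def digit (m : ℕ → ℕ) (n j : ℕ) : ℕ := (n / Mgen m j) % m j

/-- The generalized Rademacher functions `r_k(x) = exp(2πi x_k / m_k)`. -/
def rade (m : ℕ → ℕ) (k : ℕ) (x : Gm m) : ℂ :=
  Complex.exp (2 * Real.pi * Complex.I * ((x k).val : ℂ) / (m k : ℂ))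

/-- The Vilenkin system `ψ_n = Π_k r_k^{n_k}` (all digits `n_k` with `k > n` vanish). -/
def psi (m : ℕ → ℕ) (n : ℕ) (x : Gm m) : ℂ :=
  ∏ k ∈ Finset.range (n + 1), rade m k x ^ digit m n k

/-- The cylinder `I_n(x) = {y : y_0 = x_0, ..., y_{n-1} = x_{n-1}}`. -/
def cyl (m : ℕ → ℕ) (n : ℕ) (x : Gm m) : Set (Gm m) := {y | ∀ j < n, y j = x j}

/-- Vilenkin–Fourier coefficient of an integrable function. -/
def fcoef (m : ℕ → ℕ) (μ : Measure (Gm m)) (f : Gm m → ℂ) (k : ℕ) : ℂ :=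
  ∫ x, f x * (starRingEnd ℂ) (psi m k x) ∂μ

/-- Partial sums of the Vilenkin–Fourier series of a function. -/
def Spart (m : ℕ → ℕ) (μ : Measure (Gm m)) (f : Gm m → ℂ) (n : ℕ) (x : Gm m) : ℂ :=
  ∑ k ∈ Finset.range n, fcoef m μ f k * psi m k x

/-- The Dirichlet kernels `D_n = Σ_{k<n} ψ_k`. -/
def Dker (m : ℕ → ℕ) (n : ℕ) (x : Gm m) : ℂ :=
  ∑ k ∈ Finset.range n, psi m k x

/-- `f = (f^{(n)})` is a martingale w.r.t. the filtration generated by the cylinders: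
each `f^{(n)}` is integrable and, for `n ≤ k`, the conditional expectation of `f^{(k)}`
on the `n`-th σ-algebra (the average on each cylinder `I_n(x)`) equals `f^{(n)}`. -/
def IsVMartingale (m : ℕ → ℕ) (μ : Measure (Gm m)) (f : ℕ → Gm m → ℂ) : Prop :=
  (∀ n, Integrable (f n) μ) ∧
  ∀ n k : ℕ, n ≤ k → ∀ x : Gm m, f n x = (Mgen m n : ℂ) * ∫ t in cyl m n x, f k t ∂μ

/-- Vilenkin–Fourier coefficient of a martingale: `lim_k ∫ f^{(k)} ψ̄_i dμ`; since the
integral is independent of `k` once `M_k > i`, and `M_{i+1} > i`, we take `k = i+1`. -/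
def mfhat (m : ℕ → ℕ) (μ : Measure (Gm m)) (f : ℕ → Gm m → ℂ) (i : ℕ) : ℂ :=
  ∫ x, f (i + 1) x * (starRingEnd ℂ) (psi m i x) ∂μ

/-- The `H_p` (quasi-)norm of a martingale: `‖sup_n |f^{(n)}|‖_{L^p(μ)}`, as an `ℝ≥0∞`. -/
def HpNorm (m : ℕ → ℕ) (μ : Measure (Gm m)) (p : ℝ) (f : ℕ → Gm m → ℂ) : ℝ≥0∞ :=
  (∫⁻ x, (⨆ n, (‖f n x‖₊ : ℝ≥0∞)) ^ p ∂μ) ^ (1 / p)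

/-!
Choose levels `A₀ < A₁ < ⋯` with `k 2ᵏ Φ(M_{A_k}) ≤ M_{A_k}^{1/p-1}`: this is possible because
`n^{1/p-1}/Φ(n)` is unbounded and every `n` lies within a factor `λ` of some `M_A`. Put
`f₀ = ∑ₖ bₖ 1_{I_{A_k}(0)} r_{A_k}` with `bₖ = M_{A_k}^{1/p} / 2ᵏ`. Since `r_A` has mean zero on
every cylinder of level `≤ A`, the partial sums form a martingale, and since `p ≤ 1`,
`‖f₀‖_{H_p}^p ≤ ∑ₖ |bₖ|^p / M_{A_k} = ∑ₖ 2^{-pk} < ∞`. Orthogonality of the Rademacher functions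
gives `f̂₀(M_{A_k}) = bₖ / M_{A_k} = M_{A_k}^{1/p-1} / 2ᵏ ≥ k Φ(M_{A_k})`.
-/

lemma DependsOn.mul {ι : Type*} {α : ι → Type*} {β : Type*} [Mul β] {f g : (Π i, α i) → β}
    {s : Set ι} (hf : DependsOn f s) (hg : DependsOn g s) : DependsOn (fun x => f x * g x) s :=
  fun _ _ h => congrArg₂ (· * ·) (hf h) (hg h)

lemma lintegral_iSup_rpow_le_tsum {α : Type*} [MeasurableSpace α] {μ : Measure α} {p : ℝ}
    (hp0 : 0 < p) (hp1 : p ≤ 1) {F a : ℕ → α → ℝ≥0∞} (ha : ∀ j, AEMeasurable (a j) μ)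
    (hF : ∀ N x, F N x ≤ ∑ j ∈ Finset.range N, a j x) :
    ∫⁻ x, (⨆ N, F N x) ^ p ∂μ ≤ ∑' j, ∫⁻ x, a j x ^ p ∂μ := by
  rw [← lintegral_tsum fun j => (ha j).pow_const p]
  refine lintegral_mono fun x => ?_
  change ENNReal.orderIsoRpow p hp0 (⨆ N, F N x) ≤ _
  rw [(ENNReal.orderIsoRpow p hp0).map_iSup]
  refine iSup_le fun N => le_trans ?_ (ENNReal.sum_le_tsum (Finset.range N))
  calc F N x ^ p ≤ (∑ j ∈ Finset.range N, a j x) ^ p := ENNReal.rpow_le_rpow (hF N x) hp0.le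
    _ ≤ ∑ j ∈ Finset.range N, a j x ^ p :=
      Finset.le_sum_of_subadditive (· ^ p) (ENNReal.zero_rpow_of_pos hp0).le
        (fun s t => ENNReal.rpow_add_le_add_rpow s t hp0.le hp1) _ _

lemma frequently_mul_le_of_limsup_div_eq_top {ι : Type*} {l : Filter ι} {u v : ι → ℝ}
    (hu : ∀ i, 0 ≤ u i)
    (h : limsup (fun i => ENNReal.ofReal (u i) / ENNReal.ofReal (v i)) l = ⊤) {C : ℝ}
    (hC : 0 ≤ C) : ∃ᶠ i in l, C * v i ≤ u i := by
  refine (frequently_lt_of_lt_limsup (by isBoundedDefault)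
    (h ▸ ENNReal.ofReal_lt_top : ENNReal.ofReal C < _)).mono fun i hi => ?_
  rcases le_or_gt (v i) 0 with hv | hv
  · exact (mul_nonpos_of_nonneg_of_nonpos hC hv).trans (hu i)
  · have := ENNReal.mul_le_of_le_div hi.le
    rw [← ENNReal.ofReal_mul hC] at this
    exact (ENNReal.ofReal_le_ofReal_iff (hu i)).1 this

lemma ofReal_le_ofReal_div_ofReal_of_mul_le {C x y : ℝ} (hx : 0 < x) (hC : 0 ≤ C)
    (h : C * y ≤ x) : ENNReal.ofReal C ≤ ENNReal.ofReal x / ENNReal.ofReal y := by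
  rcases le_or_gt y 0 with hy | hy
  · rw [ENNReal.ofReal_of_nonpos hy, ENNReal.div_zero (ENNReal.ofReal_pos.2 hx).ne']
    exact le_top
  · rw [ENNReal.le_div_iff_mul_le (Or.inl (ENNReal.ofReal_pos.2 hy).ne')
      (Or.inl ENNReal.ofReal_ne_top), ← ENNReal.ofReal_mul hC]
    exact ENNReal.ofReal_le_ofReal h

lemma limsup_eq_top_of_natCast_le_comp {u : ℕ → ℝ≥0∞} {g : ℕ → ℕ} (hg : Tendsto g atTop atTop)
    (hu : ∀ k : ℕ, (k : ℝ≥0∞) ≤ u (g k)) : limsup u atTop = ⊤ :=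
  top_unique <| calc
    ⊤ = limsup (u ∘ g) atTop :=
      (tendsto_nhds_top_mono' ENNReal.tendsto_nat_nhds_top hu).limsup_eq.symm
    _ ≤ limsup u atTop := hg.limsup_comp_le_limsup

lemma norm_rpow_one_div_div_two_pow_rpow_div {M p : ℝ} (hM : 0 < M) (hp : 0 < p) (k : ℕ) :
    ‖((M ^ (1 / p) / 2 ^ k : ℝ) : ℂ)‖ ^ p / M = ((2 : ℝ) ^ p)⁻¹ ^ k := by
  rw [Complex.norm_real, Real.norm_of_nonneg (by positivity),
    Real.div_rpow (by positivity) (by positivity), ← Real.rpow_mul hM.le,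
    one_div_mul_cancel hp.ne', Real.rpow_one, ← Real.rpow_natCast, ← Real.rpow_mul zero_le_two,
    mul_comm, Real.rpow_mul zero_le_two, Real.rpow_natCast, inv_pow, div_div_cancel_left' hM.ne']

section Vilenkin

variable {m : ℕ → ℕ}

lemma Mgen_pos [∀ k, NeZero (m k)] (k : ℕ) : 0 < Mgen m k := by
  induction k with
  | zero => simp [Mgen]
  | succ k ih => exact Nat.mul_pos (Nat.pos_of_ne_zero (NeZero.ne (m k))) ih

lemma Mgen_strictMono (hm : ∀ k, 2 ≤ m k) : StrictMono (Mgen m) := by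
  have (k : ℕ) : NeZero (m k) := .of_pos (zero_lt_two.trans_le (hm k))
  exact strictMono_nat_of_lt_succ fun k => (Nat.lt_mul_iff_one_lt_left (Mgen_pos k)).2 (hm k)

lemma Mgen_dvd_Mgen {j k : ℕ} (h : j ≤ k) : Mgen m j ∣ Mgen m k := by
  induction k, h using Nat.le_induction with
  | base => rfl
  | succ k _ ih => exact ih.mul_left (m k)

lemma digit_Mgen (hm : ∀ k, 2 ≤ m k) (A j : ℕ) :
    digit m (Mgen m A) j = if j = A then 1 else 0 := by
  have (k : ℕ) : NeZero (m k) := .of_pos (zero_lt_two.trans_le (hm k))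
  have hpos := Mgen_pos (m := m)
  unfold digit
  rcases lt_trichotomy j A with hjA | rfl | hAj
  · obtain ⟨t, ht⟩ := Mgen_dvd_Mgen (m := m) (Nat.succ_le_of_lt hjA)
    rw [if_neg hjA.ne, ht, show Mgen m (j + 1) = Mgen m j * m j from Nat.mul_comm _ _,
      Nat.mul_assoc, Nat.mul_div_cancel_left _ (hpos j), Nat.mul_mod_right]
  · rw [if_pos rfl, Nat.div_self (hpos j), Nat.one_mod_eq_one.2 (by linarith [hm j])]
  · rw [if_neg hAj.ne', Nat.div_eq_of_lt (Mgen_strictMono hm hAj), Nat.zero_mod]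

lemma psi_Mgen (hm : ∀ k, 2 ≤ m k) (A : ℕ) : psi m (Mgen m A) = rade m A := by
  ext x
  have hA : A ∈ Finset.range (Mgen m A + 1) :=
    Finset.mem_range.2 (Nat.lt_succ_of_le ((Mgen_strictMono hm).id_le A))
  rw [psi, Finset.prod_eq_single_of_mem A hA fun j _ hj => by
    rw [digit_Mgen hm, if_neg hj, pow_zero], digit_Mgen hm, if_pos rfl, pow_one]

lemma exists_Mgen_le_lt_Mgen_succ (hm : ∀ k, 2 ≤ m k) {n : ℕ} (hn : 1 ≤ n) :
    ∃ A, Mgen m A ≤ n ∧ n < Mgen m (A + 1) := by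
  have hex : ∃ A, n < Mgen m (A + 1) := ⟨n, (Mgen_strictMono hm).id_le (n + 1)⟩
  refine ⟨Nat.find hex, ?_, Nat.find_spec hex⟩
  rcases h : Nat.find hex with _ | A
  · exact hn
  · exact not_lt.1 (Nat.find_min hex (h ▸ Nat.lt_succ_self A))

lemma DependsOn.integrable_of_Iio {E : Type*} [NormedAddCommGroup E] [∀ k, NeZero (m k)]
    {μ : Measure (Gm m)} [IsFiniteMeasure μ] {n : ℕ} {g : Gm m → E}
    (hg : DependsOn g (Set.Iio n)) : Integrable g μ := by
  obtain ⟨g', rfl⟩ := dependsOn_iff_exists_comp.1 hg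
  exact Integrable.of_finite.comp_measurable
    (measurable_pi_lambda _ fun i => measurable_pi_apply _)

lemma rade_eq_stdAddChar (k : ℕ) [NeZero (m k)] (x : Gm m) :
    rade m k x = ZMod.stdAddChar (x k) := by
  rw [ZMod.stdAddChar_apply, ZMod.toCircle_apply]
  rfl

lemma dependsOn_rade (k : ℕ) : DependsOn (rade m k) (Set.Iio (k + 1)) :=
  fun x y h => by rw [rade, rade, h k (Set.mem_Iio.2 k.lt_succ_self)]

lemma dependsOn_conj_rade (k : ℕ) :
    DependsOn (fun x => starRingEnd ℂ (rade m k x)) (Set.Iio (k + 1)) :=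
  fun _ _ h => congrArg _ (dependsOn_rade k h)

lemma norm_rade (k : ℕ) [NeZero (m k)] (x : Gm m) : ‖rade m k x‖ = 1 := by
  rw [rade_eq_stdAddChar, ZMod.stdAddChar_apply, Circle.norm_coe]

-- Stated as `χ(x_k * b)` with `b = -1`, the shape `setIntegral_cyl_mul_stdAddChar_eq_zero` takes.
lemma conj_rade (k : ℕ) [NeZero (m k)] (x : Gm m) :
    starRingEnd ℂ (rade m k x) = ZMod.stdAddChar (x k * -1) := by
  rw [rade_eq_stdAddChar, ZMod.stdAddChar_apply, ZMod.stdAddChar_apply, mul_neg_one,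
    AddChar.map_neg_eq_inv, Circle.coe_inv_eq_conj]

lemma measurableSet_cyl (n : ℕ) (x : Gm m) : MeasurableSet (cyl m n x) := by
  simp only [cyl, Set.ofPred_forall]
  exact .iInter fun j => .iInter fun _ =>
    (measurableSet_singleton (x j)).preimage (measurable_pi_apply (X := fun k => ZMod (m k)) j)

lemma cyl_zero (x : Gm m) : cyl m 0 x = Set.univ := by
  simp [cyl]

lemma DependsOn.indicator_cyl {β : Type*} [Zero β] {g : Gm m → β} {n k : ℕ}
    (hg : DependsOn g (Set.Iio k)) (hnk : n ≤ k) (x : Gm m) :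
    DependsOn ((cyl m n x).indicator g) (Set.Iio k) := by
  intro y z h
  have hyz : y ∈ cyl m n x ↔ z ∈ cyl m n x :=
    forall₂_congr fun j hj => by rw [h j (Set.mem_Iio.2 (hj.trans_le hnk))]
  by_cases hy : y ∈ cyl m n x
  · rw [Set.indicator_of_mem hy, Set.indicator_of_mem (hyz.1 hy), hg h]
  · rw [Set.indicator_of_notMem hy, Set.indicator_of_notMem (hy ∘ hyz.2)]

lemma dependsOn_indicator_cyl_const {β : Type*} [Zero β] (n : ℕ) (x : Gm m) (c : β) :
    DependsOn ((cyl m n x).indicator fun _ => c) (Set.Iio n) :=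
  ((dependsOn_const c).mono (Set.empty_subset _)).indicator_cyl le_rfl x

lemma cyl_eq_iUnion_cyl_succ (n : ℕ) (x : Gm m) :
    cyl m n x = ⋃ a : ZMod (m n), cyl m (n + 1) (Function.update x n a) := by
  ext y
  simp only [cyl, Set.mem_iUnion, Set.mem_ofPred_eq, Nat.lt_succ_iff_lt_or_eq]
  constructor
  · intro h
    refine ⟨y n, fun j hj => ?_⟩
    rcases hj with hj | rfl
    · rw [Function.update_of_ne hj.ne, h j hj]
    · rw [Function.update_self]
  · rintro ⟨a, h⟩ j hj
    rw [h j (Or.inl hj), Function.update_of_ne hj.ne]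

lemma setIntegral_cyl_eq_sum {μ : Measure (Gm m)} {g : Gm m → ℂ} (hg : Integrable g μ)
    (n : ℕ) [NeZero (m n)] (x : Gm m) :
    ∫ y in cyl m n x, g y ∂μ
      = ∑ a : ZMod (m n), ∫ y in cyl m (n + 1) (Function.update x n a), g y ∂μ := by
  rw [cyl_eq_iUnion_cyl_succ n x, integral_iUnion (fun a => measurableSet_cyl _ _) ?_
    hg.integrableOn, tsum_fintype]
  intro a b hab
  refine Set.disjoint_left.2 fun y hya hyb => hab ?_
  have ha := hya n n.lt_succ_self
  have hb := hyb n n.lt_succ_self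
  rwa [Function.update_self, ha, Function.update_self] at hb

lemma setIntegral_cyl_of_dependsOn {μ : Measure (Gm m)}
    (hμ : ∀ n x, μ (cyl m n x) = ((Mgen m n : ℝ≥0∞))⁻¹)
    {g : Gm m → ℂ} {n : ℕ} (hg : DependsOn g (Set.Iio n)) (x : Gm m) :
    ∫ y in cyl m n x, g y ∂μ = (Mgen m n : ℂ)⁻¹ * g x := by
  rw [setIntegral_congr_fun (measurableSet_cyl n x) fun y hy => hg fun j hj => hy j hj,
    setIntegral_const, measureReal_def, hμ, ENNReal.toReal_inv, ENNReal.toReal_natCast,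
    Complex.real_smul]
  push_cast
  rfl

lemma setIntegral_cyl_eq_zero_of_le [∀ k, NeZero (m k)] {μ : Measure (Gm m)} {g : Gm m → ℂ}
    (hg : Integrable g μ) {A : ℕ} (hA : ∀ y, ∫ z in cyl m A y, g z ∂μ = 0) {n : ℕ} (hn : n ≤ A)
    (x : Gm m) : ∫ z in cyl m n x, g z ∂μ = 0 := by
  induction hn using Nat.decreasingInduction generalizing x with
  | self => exact hA x
  | of_succ n _ ih =>
    rw [setIntegral_cyl_eq_sum hg]
    exact Finset.sum_eq_zero fun a _ => ih _

lemma setIntegral_cyl_mul_stdAddChar_eq_zero [∀ k, NeZero (m k)] {μ : Measure (Gm m)}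
    [IsFiniteMeasure μ] (hμ : ∀ n x, μ (cyl m n x) = ((Mgen m n : ℝ≥0∞))⁻¹)
    {A : ℕ} {h : Gm m → ℂ} (hh : DependsOn h (Set.Iio A)) {b : ZMod (m A)} (hb : b ≠ 0)
    {n : ℕ} (hn : n ≤ A) (x : Gm m) :
    ∫ y in cyl m n x, h y * ZMod.stdAddChar (y A * b) ∂μ = 0 := by
  have hdep : DependsOn (fun y => h y * ZMod.stdAddChar (y A * b)) (Set.Iio (A + 1)) :=
    (hh.mono (Set.Iio_subset_Iio A.le_succ)).mul
      fun y z hyz => by rw [hyz A (Set.mem_Iio.2 A.lt_succ_self)]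
  refine setIntegral_cyl_eq_zero_of_le (hdep.integrable_of_Iio) (fun y => ?_) hn x
  have hpiece : ∀ a : ZMod (m A), ∫ z in cyl m (A + 1) (Function.update y A a),
      h z * ZMod.stdAddChar (z A * b) ∂μ
        = (Mgen m (A + 1) : ℂ)⁻¹ * (h y * ZMod.stdAddChar (a * b)) := fun a => by
    rw [setIntegral_cyl_of_dependsOn hμ hdep, Function.update_self,
      hh fun j hj => Function.update_of_ne (Set.mem_Iio.1 hj).ne _ _]
  rw [setIntegral_cyl_eq_sum hdep.integrable_of_Iio, Finset.sum_congr rfl fun a _ => hpiece a,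
    ← Finset.mul_sum, ← Finset.mul_sum, AddChar.sum_mulShift b (ZMod.isPrimitive_stdAddChar _),
    if_neg hb, Nat.cast_zero, mul_zero, mul_zero]

def rademacherAtom (m : ℕ → ℕ) (A : ℕ) : Gm m → ℂ := (cyl m A 0).indicator (rade m A)

lemma rademacherAtom_eq_indicator_mul (A : ℕ) [NeZero (m A)] (x : Gm m) :
    rademacherAtom m A x = (cyl m A 0).indicator (fun _ => 1) x * ZMod.stdAddChar (x A * 1) := by
  rw [rademacherAtom, mul_one, ← rade_eq_stdAddChar]
  by_cases hx : x ∈ cyl m A 0 <;> simp [hx]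

lemma dependsOn_rademacherAtom (A : ℕ) :
    DependsOn (rademacherAtom m A) (Set.Iio (A + 1)) :=
  (dependsOn_rade A).indicator_cyl A.le_succ 0

lemma enorm_rademacherAtom (A : ℕ) [NeZero (m A)] (x : Gm m) :
    ‖rademacherAtom m A x‖ₑ = (cyl m A 0).indicator (fun _ => 1) x := by
  by_cases hx : x ∈ cyl m A 0
  · rw [rademacherAtom, Set.indicator_of_mem hx, Set.indicator_of_mem hx, ← ofReal_norm,
      norm_rade, ENNReal.ofReal_one]
  · rw [rademacherAtom, Set.indicator_of_notMem hx, Set.indicator_of_notMem hx, enorm_zero]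

lemma Mgen_mul_setIntegral_cyl_rademacherAtom (hm : ∀ k, 2 ≤ m k) {μ : Measure (Gm m)}
    [IsFiniteMeasure μ] (hμ : ∀ n x, μ (cyl m n x) = ((Mgen m n : ℝ≥0∞))⁻¹) (n A : ℕ)
    (x : Gm m) :
    (Mgen m n : ℂ) * ∫ y in cyl m n x, rademacherAtom m A y ∂μ
      = if A < n then rademacherAtom m A x else 0 := by
  have (k : ℕ) : NeZero (m k) := .of_pos (zero_lt_two.trans_le (hm k))
  have (k : ℕ) : Fact (1 < m k) := ⟨hm k⟩
  split_ifs with hAn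
  · rw [setIntegral_cyl_of_dependsOn hμ ((dependsOn_rademacherAtom A).mono
      (Set.Iio_subset_Iio hAn)), ← mul_assoc,
      mul_inv_cancel₀ (by exact_mod_cast (Mgen_pos n).ne'), one_mul]
  · simp_rw [rademacherAtom_eq_indicator_mul]
    rw [setIntegral_cyl_mul_stdAddChar_eq_zero hμ (dependsOn_indicator_cyl_const A 0 1)
      one_ne_zero (not_lt.1 hAn), mul_zero]

lemma integral_rademacherAtom_mul_conj_rade (hm : ∀ k, 2 ≤ m k) {μ : Measure (Gm m)}
    [IsFiniteMeasure μ] (hμ : ∀ n x, μ (cyl m n x) = ((Mgen m n : ℝ≥0∞))⁻¹) (A B : ℕ) :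
    ∫ y, rademacherAtom m A y * starRingEnd ℂ (rade m B y) ∂μ
      = if A = B then (Mgen m A : ℂ)⁻¹ else 0 := by
  have (k : ℕ) : NeZero (m k) := .of_pos (zero_lt_two.trans_le (hm k))
  have (k : ℕ) : Fact (1 < m k) := ⟨hm k⟩
  rcases lt_trichotomy A B with hAB | rfl | hBA
  · rw [if_neg hAB.ne, ← setIntegral_univ, ← cyl_zero (0 : Gm m)]
    simp_rw [conj_rade]
    exact setIntegral_cyl_mul_stdAddChar_eq_zero hμ
      ((dependsOn_rademacherAtom A).mono (Set.Iio_subset_Iio hAB)) (neg_ne_zero.2 one_ne_zero)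
      (Nat.zero_le B) 0
  · have hsq : ∀ y, rademacherAtom m A y * starRingEnd ℂ (rade m A y)
        = (cyl m A 0).indicator (fun _ => 1) y := fun y => by
      by_cases hy : y ∈ cyl m A 0
      · rw [rademacherAtom, Set.indicator_of_mem hy, Set.indicator_of_mem hy, Complex.mul_conj',
          norm_rade, Complex.ofReal_one, one_pow]
      · rw [rademacherAtom, Set.indicator_of_notMem hy, Set.indicator_of_notMem hy, zero_mul]
    rw [integral_congr_ae (.of_forall hsq), if_pos rfl, integral_indicator (measurableSet_cyl A 0),
      setIntegral_cyl_of_dependsOn hμ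
        ((dependsOn_const (α := fun k => ZMod (m k)) (1 : ℂ)).mono (Set.empty_subset _)), mul_one]
  · rw [if_neg hBA.ne', ← setIntegral_univ, ← cyl_zero (0 : Gm m)]
    have hdep : DependsOn
        (fun y => (cyl m A 0).indicator (fun _ => 1) y * starRingEnd ℂ (rade m B y)) (Set.Iio A) :=
      (dependsOn_indicator_cyl_const A 0 1).mul
        ((dependsOn_conj_rade B).mono (Set.Iio_subset_Iio hBA))
    simp_rw [rademacherAtom_eq_indicator_mul, mul_right_comm _ (ZMod.stdAddChar _)]
    exact setIntegral_cyl_mul_stdAddChar_eq_zero hμ hdep one_ne_zero (Nat.zero_le A) 0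

def atomicMartingale (m : ℕ → ℕ) (A : ℕ → ℕ) (b : ℕ → ℂ) (N : ℕ) (x : Gm m) : ℂ :=
  ∑ j ∈ Finset.range N with A j < N, b j * rademacherAtom m (A j) x

lemma dependsOn_atomicMartingale (A : ℕ → ℕ) (b : ℕ → ℂ) (N : ℕ) :
    DependsOn (atomicMartingale m A b N) (Set.Iio N) := fun y z h =>
  Finset.sum_congr rfl fun j hj => by
    rw [(dependsOn_rademacherAtom (A j)).mono
      (Set.Iio_subset_Iio (Finset.mem_filter.1 hj).2) h]

lemma isVMartingale_atomicMartingale (hm : ∀ k, 2 ≤ m k) {μ : Measure (Gm m)}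
    [IsFiniteMeasure μ] (hμ : ∀ n x, μ (cyl m n x) = ((Mgen m n : ℝ≥0∞))⁻¹) {A : ℕ → ℕ}
    (hA : ∀ j, j ≤ A j) (b : ℕ → ℂ) : IsVMartingale m μ (atomicMartingale m A b) := by
  have (k : ℕ) : NeZero (m k) := .of_pos (zero_lt_two.trans_le (hm k))
  refine ⟨fun N => (dependsOn_atomicMartingale A b N).integrable_of_Iio, fun n k hnk x => ?_⟩
  have hint : ∀ j, Integrable (fun y => b j * rademacherAtom m (A j) y) μ :=
    fun j => ((dependsOn_rademacherAtom (A j)).integrable_of_Iio).const_mul (b j)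
  have hfilter : {j ∈ {j ∈ Finset.range k | A j < k} | A j < n}
      = {j ∈ Finset.range n | A j < n} := by
    ext j
    simp only [Finset.mem_filter, Finset.mem_range]
    have := hA j
    omega
  simp_rw [atomicMartingale]
  rw [integral_finsetSum _ fun j _ => (hint j).integrableOn, Finset.mul_sum]
  simp_rw [integral_const_mul, mul_left_comm _ (b _),
    Mgen_mul_setIntegral_cyl_rademacherAtom hm hμ, mul_ite, mul_zero]
  rw [← Finset.sum_filter, hfilter]

lemma mfhat_atomicMartingale_Mgen (hm : ∀ k, 2 ≤ m k) {μ : Measure (Gm m)}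
    [IsFiniteMeasure μ] (hμ : ∀ n x, μ (cyl m n x) = ((Mgen m n : ℝ≥0∞))⁻¹) {A : ℕ → ℕ}
    (hA : StrictMono A)
    (b : ℕ → ℂ) (k : ℕ) :
    mfhat m μ (atomicMartingale m A b) (Mgen m (A k)) = b k / Mgen m (A k) := by
  have (k : ℕ) : NeZero (m k) := .of_pos (zero_lt_two.trans_le (hm k))
  have hint : ∀ j, Integrable (fun y => b j * (rademacherAtom m (A j) y
      * starRingEnd ℂ (rade m (A k) y))) μ := fun j =>
    (((dependsOn_rademacherAtom (A j)).mono (Set.Iio_subset_Iio le_self_add)).mul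
      ((dependsOn_conj_rade (A k)).mono (Set.Iio_subset_Iio le_add_self))).integrable_of_Iio
      |>.const_mul (b j)
  have hk : k ∈ {j ∈ Finset.range (Mgen m (A k) + 1) | A j < Mgen m (A k) + 1} := by
    have h1 : k ≤ A k := hA.id_le k
    have h2 : A k ≤ Mgen m (A k) := (Mgen_strictMono hm).id_le (A k)
    simp only [Finset.mem_filter, Finset.mem_range]
    omega
  rw [mfhat, psi_Mgen hm]
  simp_rw [atomicMartingale, Finset.sum_mul, mul_assoc]
  rw [integral_finsetSum _ fun j _ => hint j]
  simp_rw [integral_const_mul, integral_rademacherAtom_mul_conj_rade hm hμ, hA.injective.eq_iff,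
    mul_ite, mul_zero]
  rw [Finset.sum_ite_eq', if_pos hk, div_eq_mul_inv]

lemma lintegral_enorm_mul_rademacherAtom_rpow [∀ k, NeZero (m k)] {μ : Measure (Gm m)}
    (hμ : ∀ n x, μ (cyl m n x) = ((Mgen m n : ℝ≥0∞))⁻¹) {p : ℝ} (hp0 : 0 < p) (c : ℂ)
    (A : ℕ) :
    ∫⁻ x, ‖c * rademacherAtom m A x‖ₑ ^ p ∂μ = ENNReal.ofReal (‖c‖ ^ p / Mgen m A) := by
  have hind : ∀ x,
      ‖c * rademacherAtom m A x‖ₑ ^ p = (cyl m A 0).indicator (fun _ => ‖c‖ₑ ^ p) x := fun x => by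
      by_cases hx : x ∈ cyl m A 0 <;>
        simp [enorm_rademacherAtom, hx, ENNReal.zero_rpow_of_pos hp0]
  simp_rw [hind]
  rw [lintegral_indicator_const (measurableSet_cyl A 0), hμ, ← ofReal_norm,
    ENNReal.ofReal_rpow_of_nonneg (norm_nonneg c) hp0.le, ← ENNReal.ofReal_natCast,
    ← ENNReal.ofReal_inv_of_pos (by exact_mod_cast Mgen_pos A),
    ← ENNReal.ofReal_mul (by positivity), div_eq_mul_inv]

lemma HpNorm_atomicMartingale_lt_top [∀ k, NeZero (m k)] {μ : Measure (Gm m)}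
    [IsFiniteMeasure μ]
    (hμ : ∀ n x, μ (cyl m n x) = ((Mgen m n : ℝ≥0∞))⁻¹) {p : ℝ} (hp0 : 0 < p) (hp1 : p ≤ 1)
    (A : ℕ → ℕ) {b : ℕ → ℂ} (hb : Summable fun j => ‖b j‖ ^ p / Mgen m (A j)) :
    HpNorm m μ p (atomicMartingale m A b) < ⊤ := by
  have hmeas : ∀ j, AEMeasurable (fun x => ‖b j * rademacherAtom m (A j) x‖ₑ) μ := fun j =>
    ((dependsOn_rademacherAtom (A j)).integrable_of_Iio.const_mul (b j)).1.enorm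
  have hbound : ∀ N x, (‖atomicMartingale m A b N x‖₊ : ℝ≥0∞)
      ≤ ∑ j ∈ Finset.range N, ‖b j * rademacherAtom m (A j) x‖ₑ := fun N x =>
    (enorm_sum_le _ _).trans (Finset.sum_le_sum_of_subset (Finset.filter_subset _ _))
  refine ENNReal.rpow_lt_top_of_nonneg (by positivity) (ne_top_of_le_ne_top ?_
    (lintegral_iSup_rpow_le_tsum hp0 hp1 hmeas hbound))
  simp_rw [lintegral_enorm_mul_rademacherAtom_rpow hμ hp0]
  rw [← ENNReal.ofReal_tsum_of_nonneg (fun j => by positivity) hb]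
  exact ENNReal.ofReal_ne_top

lemma frequently_mul_le_Mgen_rpow (hm : ∀ k, 2 ≤ m k) {lam : ℕ} (hlam : ∀ k, m k ≤ lam)
    {q : ℝ} (hq : 0 ≤ q) {Φ : ℕ → ℝ} (hΦ : Monotone Φ)
    (h : ∀ C, 0 ≤ C → ∃ᶠ n in atTop, C * Φ n ≤ (n : ℝ) ^ q) {C : ℝ} (hC : 0 ≤ C) :
    ∃ᶠ A in atTop, C * Φ (Mgen m A) ≤ (Mgen m A : ℝ) ^ q := by
  have (k : ℕ) : NeZero (m k) := .of_pos (zero_lt_two.trans_le (hm k))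
  have hlam0 : (0 : ℝ) < lam := by exact_mod_cast zero_lt_two.trans_le ((hm 0).trans (hlam 0))
  have hlamq : (0 : ℝ) < (lam : ℝ) ^ q := Real.rpow_pos_of_pos hlam0 q
  rw [frequently_atTop]
  intro N
  obtain ⟨n, hNn, hn⟩ := frequently_atTop.1 (h (C * lam ^ q) (by positivity)) (Mgen m N)
  obtain ⟨A, hAn, hnA⟩ := exists_Mgen_le_lt_Mgen_succ hm ((Mgen_pos N).trans_le hNn)
  refine ⟨A, Nat.lt_succ_iff.1 ((Mgen_strictMono hm).lt_iff_lt.1 (hNn.trans_lt hnA)), ?_⟩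
  have hn_le : (n : ℝ) ≤ lam * Mgen m A := by
    exact_mod_cast hnA.le.trans (Nat.mul_le_mul_right _ (hlam A))
  refine le_of_mul_le_mul_left ?_ hlamq
  calc (lam : ℝ) ^ q * (C * Φ (Mgen m A)) ≤ C * lam ^ q * Φ n := by
        rw [mul_left_comm, ← mul_assoc]
        exact mul_le_mul_of_nonneg_left (hΦ hAn) (by positivity)
    _ ≤ (n : ℝ) ^ q := hn
    _ ≤ ((lam : ℝ) * Mgen m A) ^ q := Real.rpow_le_rpow (Nat.cast_nonneg n) hn_le hq
    _ = (lam : ℝ) ^ q * (Mgen m A : ℝ) ^ q := Real.mul_rpow hlam0.le (Nat.cast_nonneg _)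

end Vilenkin

theorem exists_martingale_large_fourier_coefficients_general
    (m : ℕ → ℕ) (hm : ∀ k, 2 ≤ m k) (lam : ℕ) (hlam : ∀ k, m k ≤ lam)
    (μ : Measure (Gm m)) (hμ : ∀ n x, μ (cyl m n x) = ((Mgen m n : ℝ≥0∞))⁻¹)
    (p : ℝ) (hp0 : 0 < p) (hp1 : p < 1)
    (Φ : ℕ → ℝ) (hΦmono : Monotone Φ)
    (hΦ : Filter.limsup
      (fun n : ℕ => ENNReal.ofReal ((n : ℝ) ^ (1 / p - 1)) / ENNReal.ofReal (Φ n))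
      Filter.atTop = ⊤) :
    ∃ f : ℕ → Gm m → ℂ, IsVMartingale m μ f ∧ HpNorm m μ p f < ⊤ ∧
      Filter.limsup
        (fun n : ℕ => ENNReal.ofReal ‖mfhat m μ f n‖ / ENNReal.ofReal (Φ n))
        Filter.atTop = ⊤ := by
  have (k : ℕ) : NeZero (m k) := .of_pos (zero_lt_two.trans_le (hm k))
  have : IsProbabilityMeasure μ := ⟨by simpa [cyl_zero, Mgen] using hμ 0 0⟩
  have hq : 0 ≤ 1 / p - 1 := by rw [sub_nonneg, le_div_iff₀ hp0]; linarith
  have hM (k : ℕ) : (0 : ℝ) < Mgen m k := by exact_mod_cast Mgen_pos k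
  obtain ⟨A, hA, hAΦ⟩ := extraction_forall_of_frequently fun k : ℕ =>
    frequently_mul_le_Mgen_rpow hm hlam hq hΦmono
      (fun C hC => frequently_mul_le_of_limsup_div_eq_top (fun n => by positivity) hΦ hC)
      (by positivity : (0 : ℝ) ≤ k * 2 ^ k)
  set b : ℕ → ℂ := fun k => ((Mgen m (A k) : ℝ) ^ (1 / p) / 2 ^ k : ℝ)
  refine ⟨atomicMartingale m A b, isVMartingale_atomicMartingale hm hμ hA.id_le b,
    HpNorm_atomicMartingale_lt_top hμ hp0 hp1.le A ?_,
    limsup_eq_top_of_natCast_le_comp ((Mgen_strictMono hm).comp hA).tendsto_atTop fun k => ?_⟩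
  · simp_rw [b, norm_rpow_one_div_div_two_pow_rpow_div (hM _) hp0]
    exact summable_geometric_of_lt_one (by positivity)
      (inv_lt_one_of_one_lt₀ (Real.one_lt_rpow one_lt_two hp0))
  · have hcoef : mfhat m μ (atomicMartingale m A b) (Mgen m (A k))
        = ((Mgen m (A k) : ℝ) ^ (1 / p - 1) / 2 ^ k : ℝ) := by
      rw [mfhat_atomicMartingale_Mgen hm hμ hA, Real.rpow_sub (hM _), Real.rpow_one]
      simp only [b]
      push_cast
      ring
    rw [Function.comp_apply, hcoef, Complex.norm_real, Real.norm_of_nonneg (by positivity),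
      ← ENNReal.ofReal_natCast]
    refine ofReal_le_ofReal_div_ofReal_of_mul_le
      (div_pos (Real.rpow_pos_of_pos (hM _) _) (by positivity)) k.cast_nonneg ?_
    rw [le_div_iff₀ (by positivity)]
    linarith [hAΦ k]

/-- For `0 < p < 1` and any nondecreasing nonnegative `Φ` with
`limsup_n n^{1/p-1}/Φ(n) = ∞`, there exists a martingale `f₀ ∈ H_p(G_m)` with
`limsup_n |f̂₀(n)|/Φ(n) = ∞`. -/
theorem exists_martingale_large_fourier_coefficients
    (m : ℕ → ℕ) (hm : ∀ k, 2 ≤ m k) (lam : ℕ) (hlam : ∀ k, m k ≤ lam)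
    (μ : Measure (Gm m)) (hμ : ∀ n x, μ (cyl m n x) = ((Mgen m n : ℝ≥0∞))⁻¹)
    (p : ℝ) (hp0 : 0 < p) (hp1 : p < 1)
    (Φ : ℕ → ℝ) (hΦ0 : ∀ n, 0 ≤ Φ n) (hΦmono : Monotone Φ)
    (hΦ : Filter.limsup
      (fun n : ℕ => ENNReal.ofReal ((n : ℝ) ^ (1 / p - 1)) / ENNReal.ofReal (Φ n))
      Filter.atTop = ⊤) :
    ∃ f : ℕ → Gm m → ℂ, IsVMartingale m μ f ∧ HpNorm m μ p f < ⊤ ∧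
      Filter.limsup
        (fun n : ℕ => ENNReal.ofReal ‖mfhat m μ f n‖ / ENNReal.ofReal (Φ n))
        Filter.atTop = ⊤ :=
  exists_martingale_large_fourier_coefficients_general m hm lam hlam μ hμ p hp0 hp1 Φ hΦmono hΦ
end
end

section
/- Let 0 < p < 1, let N ∈ ℕ, and let a be a p-atom with support contained in I_N (i.e. supp(a) ⊆ I_N, ∫_{I_N} a dμ = 0, ‖a‖_∞ ≤ M_N^{1/p}). Then for every n > M_N, every s < N, and every x ∈ I_s ∖ I_{s+1}, one has |S_n a(x)| / (n+1)^{1/p−1} ≤ λ M_s, where λ = sup_k m_k. -/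
open MeasureTheory Filter ENNReal Finset

noncomputable section

/-!
Expanding the Fourier coefficients, `S_n a(x) = ∫_{I_N} a(t) K(t) dμ(t)` with
`K(t) = Σ_{k<n} ψ̄_k(t) ψ_k(x)`. The `k`-th term of `K` is `∏_j w_j ^ k_j` with
`w_j = r_j(x) r̄_j(t)`, and summed over a block `q M_{s+1} ≤ k < (q+1) M_{s+1}` it factors as
its value at `q M_{s+1}` times `∏_{j ≤ s} Σ_{d < m_j} w_j ^ d`. For `t ∈ I_N` we have
`w_s = r_s(x)`, a nontrivial `m_s`-th root of unity since `x_s ≠ 0`, so every full block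
cancels and `|K(t)| ≤ M_{s+1} ≤ λ M_s`. The atom then contributes
`‖a‖_∞ μ(I_N) ≤ M_N ^ (1/p - 1) ≤ (n+1) ^ (1/p - 1)`.
-/

namespace Vilenkin

variable {m : ℕ → ℕ}

lemma Mgen_succ (k : ℕ) : Mgen m (k + 1) = m k * Mgen m k := rfl

lemma Mgen_pos (hm : ∀ k, 0 < m k) (k : ℕ) : 0 < Mgen m k := by
  induction k with
  | zero => exact Nat.one_pos
  | succ k ih => exact Nat.mul_pos (hm k) ih

lemma Mgen_dvd_Mgen {i j : ℕ} (h : i ≤ j) : Mgen m i ∣ Mgen m j := by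
  induction j, h using Nat.le_induction with
  | base => exact dvd_rfl
  | succ j _ ih => exact ih.mul_left (m j)

lemma Mgen_le_Mgen (hm : ∀ k, 0 < m k) {i j : ℕ} (h : i ≤ j) : Mgen m i ≤ Mgen m j :=
  Nat.le_of_dvd (Mgen_pos hm j) (Mgen_dvd_Mgen h)

lemma lt_Mgen (hm : ∀ k, 2 ≤ m k) (k : ℕ) : k < Mgen m k := by
  induction k with
  | zero => exact Nat.one_pos
  | succ k ih =>
    have := hm k
    rw [Mgen_succ]
    nlinarith

lemma digit_eq_zero_of_lt_Mgen {k j : ℕ} (h : k < Mgen m j) : digit m k j = 0 := by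
  simp [digit, Nat.div_eq_of_lt h]

lemma digit_mul_Mgen_self {j : ℕ} (hM : 0 < Mgen m j) (q : ℕ) :
    digit m (q * Mgen m j) j = q % m j := by
  rw [digit, Nat.mul_div_cancel _ hM]

lemma digit_mul_Mgen_of_lt (hm : ∀ k, 0 < m k) {i j : ℕ} (h : i < j) (q : ℕ) :
    digit m (q * Mgen m j) i = 0 := by
  obtain ⟨c, hc⟩ := Mgen_dvd_Mgen (m := m) h
  rw [digit, hc, Mgen_succ,
    show q * (m i * Mgen m i * c) = q * c * m i * Mgen m i by ring,
    Nat.mul_div_cancel _ (Mgen_pos hm i), Nat.mul_mod_left]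

lemma digit_mul_Mgen_add (hm : ∀ k, 0 < m k) {j r : ℕ} (hr : r < Mgen m j) (q i : ℕ) :
    digit m (q * Mgen m j + r) i = digit m (q * Mgen m j) i + digit m r i := by
  rcases lt_or_ge i j with hij | hji
  · obtain ⟨c, hc⟩ := Mgen_dvd_Mgen (m := m) hij
    rw [digit_mul_Mgen_of_lt hm hij, zero_add, digit, digit, hc,
      Mgen_succ,
      show q * (m i * Mgen m i * c) + r = r + q * c * m i * Mgen m i by ring,
      Nat.add_mul_div_right _ _ (Mgen_pos hm i), Nat.add_mul_mod_self_right]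
  · obtain ⟨c, hc⟩ := Mgen_dvd_Mgen (m := m) hji
    have hMj := Mgen_pos hm j
    rw [digit_eq_zero_of_lt_Mgen (hr.trans_le (Mgen_le_Mgen hm hji)), add_zero, digit, digit,
      hc, ← Nat.div_div_eq_div_mul, ← Nat.div_div_eq_div_mul, Nat.mul_div_cancel _ hMj,
      add_comm, Nat.add_mul_div_right _ _ hMj, Nat.div_eq_of_lt hr, zero_add]

lemma sum_range_mul_eq_sum_sum {M : Type*} [AddCommMonoid M] (f : ℕ → M) (Q L : ℕ) :
    ∑ k ∈ range (Q * L), f k = ∑ q ∈ range Q, ∑ r ∈ range L, f (q * L + r) := by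
  induction Q with
  | zero => simp
  | succ Q ih => rw [Nat.succ_mul, sum_range_add, ih, sum_range_succ]

/-- `∏_j w_j ^ (n_j)` over the digits of `k`: the Vilenkin function `ψ_k` with the
Rademacher values `r_j(x)` replaced by arbitrary numbers `w_j`. -/
def digitProd (m : ℕ → ℕ) (w : ℕ → ℂ) (k : ℕ) : ℂ :=
  ∏ j ∈ range (k + 1), w j ^ digit m k j

lemma prod_range_eq_digitProd (hm : ∀ k, 2 ≤ m k) (w : ℕ → ℂ) {k J : ℕ} (hk : k < J) :
    ∏ j ∈ range J, w j ^ digit m k j = digitProd m w k := by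
  refine (prod_subset (range_subset_range.2 hk) fun j hjJ hjk => ?_).symm
  have hkj : k < j := by simpa using hjk
  rw [digit_eq_zero_of_lt_Mgen (hkj.trans (lt_Mgen hm j)), pow_zero]

lemma digitProd_mul_Mgen_add (hm : ∀ k, 2 ≤ m k) (w : ℕ → ℂ) {j r : ℕ} (hr : r < Mgen m j)
    (q : ℕ) :
    digitProd m w (q * Mgen m j + r) = digitProd m w (q * Mgen m j) * digitProd m w r := by
  have hm0 : ∀ k, 0 < m k := fun k => two_pos.trans_le (hm k)
  set J := q * Mgen m j + r + 1
  rw [← prod_range_eq_digitProd hm w (k := q * Mgen m j) (J := J) (by omega),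
    ← prod_range_eq_digitProd hm w (k := r) (J := J) (by omega), digitProd, ← prod_mul_distrib]
  exact prod_congr rfl fun i _ => by rw [digit_mul_Mgen_add hm0 hr, pow_add]

lemma digitProd_mul_Mgen (hm : ∀ k, 2 ≤ m k) (w : ℕ → ℂ) {j d : ℕ} (hd : d < m j) :
    digitProd m w (d * Mgen m j) = w j ^ d := by
  have hm0 : ∀ k, 0 < m k := fun k => two_pos.trans_le (hm k)
  rw [digitProd, prod_eq_single j]
  · rw [digit_mul_Mgen_self (Mgen_pos hm0 j), Nat.mod_eq_of_lt hd]
  · intro i _ hij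
    rcases lt_or_gt_of_ne hij with hij | hji
    · rw [digit_mul_Mgen_of_lt hm0 hij, pow_zero]
    · have : d * Mgen m j < Mgen m i :=
        calc d * Mgen m j < Mgen m (j + 1) := Nat.mul_lt_mul_of_pos_right hd (Mgen_pos hm0 j)
          _ ≤ Mgen m i := Mgen_le_Mgen hm0 hji
      rw [digit_eq_zero_of_lt_Mgen this, pow_zero]
  · intro hj
    have hdj : d * Mgen m j < j := by simpa using hj
    have : d = 0 := by
      by_contra hd0
      have := lt_Mgen hm j
      nlinarith [Nat.pos_of_ne_zero hd0]
    simp [this, digit]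

lemma sum_range_Mgen_digitProd (hm : ∀ k, 2 ≤ m k) (w : ℕ → ℂ) (J : ℕ) :
    ∑ k ∈ range (Mgen m J), digitProd m w k = ∏ j ∈ range J, ∑ d ∈ range (m j), w j ^ d := by
  induction J with
  | zero => simp [Mgen, digitProd, digit]
  | succ J ih =>
    rw [prod_range_succ, ← ih, Mgen_succ,
      sum_range_mul_eq_sum_sum, mul_comm, sum_mul]
    refine sum_congr rfl fun d hd => ?_
    rw [mul_sum]
    refine sum_congr rfl fun r hr => ?_
    rw [digitProd_mul_Mgen_add hm w (mem_range.1 hr), digitProd_mul_Mgen hm w (mem_range.1 hd),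
      mul_comm]

lemma norm_sum_range_le_of_sum_block_eq_zero {f : ℕ → ℂ} (hf : ∀ k, ‖f k‖ ≤ 1) {L : ℕ}
    (hL : 0 < L) (hblock : ∀ q, ∑ r ∈ range L, f (q * L + r) = 0) (n : ℕ) :
    ‖∑ k ∈ range n, f k‖ ≤ L := by
  rw [← Nat.div_add_mod' n L, sum_range_add, sum_range_mul_eq_sum_sum,
    sum_eq_zero fun q _ => hblock q, zero_add]
  calc ‖∑ r ∈ range (n % L), f (n / L * L + r)‖ ≤ ∑ r ∈ range (n % L), (1 : ℝ) :=
        norm_sum_le_of_le _ fun r _ => hf _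
    _ ≤ L := by simpa using (Nat.mod_lt n hL).le

lemma norm_digitProd_le (w : ℕ → ℂ) (hw : ∀ j, ‖w j‖ ≤ 1) (k : ℕ) : ‖digitProd m w k‖ ≤ 1 := by
  rw [digitProd, norm_prod]
  exact prod_le_one (fun _ _ => norm_nonneg _) fun j _ => by
    rw [norm_pow]; exact pow_le_one₀ (norm_nonneg _) (hw j)

lemma norm_sum_range_digitProd_le (hm : ∀ k, 2 ≤ m k) (w : ℕ → ℂ) (hw : ∀ j, ‖w j‖ ≤ 1)
    {i J : ℕ} (hiJ : i < J) (hi : ∑ d ∈ range (m i), w i ^ d = 0) (n : ℕ) :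
    ‖∑ k ∈ range n, digitProd m w k‖ ≤ Mgen m J := by
  have hm0 : ∀ k, 0 < m k := fun k => two_pos.trans_le (hm k)
  refine norm_sum_range_le_of_sum_block_eq_zero (norm_digitProd_le w hw) (Mgen_pos hm0 J)
    (fun q => ?_) n
  rw [sum_congr rfl fun r hr => digitProd_mul_Mgen_add hm w (mem_range.1 hr) q, ← mul_sum,
    sum_range_Mgen_digitProd hm, prod_eq_zero (mem_range.2 hiJ) hi, mul_zero]

lemma rade_eq_exp_pow (k : ℕ) (x : Gm m) :
    rade m k x = Complex.exp (2 * Real.pi * Complex.I / m k) ^ (x k).val := by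
  rw [rade, ← Complex.exp_nat_mul]
  ring_nf

lemma norm_rade (k : ℕ) (x : Gm m) : ‖rade m k x‖ = 1 := by
  rw [rade, show 2 * Real.pi * Complex.I * ((x k).val : ℂ) / (m k : ℂ)
      = ((2 * Real.pi * (x k).val / m k : ℝ) : ℂ) * Complex.I by push_cast; ring]
  exact Complex.norm_exp_ofReal_mul_I _

lemma norm_psi_le (k : ℕ) (x : Gm m) : ‖psi m k x‖ ≤ 1 :=
  norm_digitProd_le _ (fun j => (norm_rade j x).le) k

lemma rade_of_eq_zero {k : ℕ} {x : Gm m} (h : x k = 0) : rade m k x = 1 := by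
  simp [rade, h]

lemma sum_range_rade_pow_eq_zero {k : ℕ} [NeZero (m k)] {x : Gm m} (h : x k ≠ 0) :
    ∑ d ∈ range (m k), rade m k x ^ d = 0 := by
  have hζ := Complex.isPrimitiveRoot_exp (m k) (NeZero.ne _)
  have hne : rade m k x ≠ 1 := by
    rw [rade_eq_exp_pow]
    exact hζ.pow_ne_one_of_pos_of_lt ((ZMod.val_ne_zero _).2 h) (ZMod.val_lt _)
  rw [geom_sum_eq hne, rade_eq_exp_pow, pow_right_comm, hζ.pow_eq_one, one_pow,
    sub_self, zero_div]

lemma measurable_psi (k : ℕ) : Measurable (psi m k) := by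
  unfold psi rade
  fun_prop

lemma conj_psi_mul_psi (k : ℕ) (x t : Gm m) :
    starRingEnd ℂ (psi m k t) * psi m k x
      = digitProd m (fun j => rade m j x * starRingEnd ℂ (rade m j t)) k := by
  simp only [psi, digitProd, map_prod, map_pow, ← prod_mul_distrib, mul_pow, mul_comm]

lemma norm_sum_conj_psi_mul_psi_le (hm : ∀ k, 2 ≤ m k) {s : ℕ} {x t : Gm m} (hxs : x s ≠ 0)
    (hts : t s = 0) (n : ℕ) :
    ‖∑ k ∈ range n, starRingEnd ℂ (psi m k t) * psi m k x‖ ≤ Mgen m (s + 1) := by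
  have : NeZero (m s) := ⟨by have := hm s; omega⟩
  simp only [conj_psi_mul_psi]
  refine norm_sum_range_digitProd_le hm _ (fun j => ?_) (Nat.lt_succ_self s) ?_ n
  · simp [norm_rade]
  · simpa [rade_of_eq_zero hts] using sum_range_rade_pow_eq_zero hxs

lemma Spart_eq_integral {μ : Measure (Gm m)} {f : Gm m → ℂ} (hf : Integrable f μ) (n : ℕ)
    (x : Gm m) :
    Spart m μ f n x = ∫ t, f t * ∑ k ∈ range n, starRingEnd ℂ (psi m k t) * psi m k x ∂μ := by
  have hint : ∀ k, Integrable (fun t => f t * starRingEnd ℂ (psi m k t)) μ := fun k =>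
    hf.mul_bdd (Complex.continuous_conj.measurable.comp (measurable_psi k)).aestronglyMeasurable
      (ae_of_all _ fun t => (RCLike.norm_conj _).trans_le (norm_psi_le k t))
  simp only [Spart, fcoef, mul_sum, ← mul_assoc, ← integral_mul_const]
  exact (integral_finsetSum _ fun k _ => (hint k).mul_const _).symm

end Vilenkin

open Vilenkin

theorem partial_sum_atom_pointwise_bound_general
    (m : ℕ → ℕ) (hm : ∀ k, 2 ≤ m k) (lam : ℕ) (hlam : ∀ k, m k ≤ lam)
    (μ : Measure (Gm m)) (hμ : ∀ n x, μ (cyl m n x) = ((Mgen m n : ℝ≥0∞))⁻¹)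
    (p : ℝ) (hp0 : 0 < p) (hp1 : p < 1)
    (N : ℕ) (a : Gm m → ℂ) (ha : Measurable a)
    (hsupp : ∀ x ∉ cyl m N 0, a x = 0)
    (hbound : ∀ x, ‖a x‖ ≤ (Mgen m N : ℝ) ^ (1 / p))
    (n : ℕ) (hn : Mgen m N < n) (s : ℕ) (hs : s < N)
    (x : Gm m) (hx : x ∈ cyl m s 0 \ cyl m (s + 1) 0) :
    ‖Spart m μ a n x‖ / ((n : ℝ) + 1) ^ (1 / p - 1) ≤
      (lam : ℝ) * Mgen m s := by
  have hMN : (0 : ℝ) < Mgen m N := by exact_mod_cast Mgen_pos (fun k => two_pos.trans_le (hm k)) N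
  have hxs : x s ≠ 0 := fun h => hx.2 fun j hj =>
    (Nat.lt_succ_iff_lt_or_eq.1 hj).elim (hx.1 j) fun hjs => hjs ▸ h
  have : IsFiniteMeasure μ := ⟨by simpa [cyl, Mgen] using (hμ 0 0).trans_lt (by simp [Mgen])⟩
  have ha_int : Integrable a μ := (integrable_const _).mono' ha.aestronglyMeasurable
    (ae_of_all _ hbound)
  have hkernel : ∀ t ∈ cyl m N 0, ‖a t * ∑ k ∈ range n, starRingEnd ℂ (psi m k t) * psi m k x‖
      ≤ (Mgen m N : ℝ) ^ (1 / p) * Mgen m (s + 1) := fun t ht => by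
    rw [norm_mul]
    exact mul_le_mul (hbound t) (norm_sum_conj_psi_mul_psi_le hm hxs (ht s hs) n)
      (norm_nonneg _) (Real.rpow_nonneg hMN.le _)
  have hexp : 0 ≤ 1 / p - 1 := by rw [sub_nonneg, le_div_iff₀ hp0]; linarith
  rw [div_le_iff₀ (by positivity), Spart_eq_integral ha_int,
    ← setIntegral_eq_integral_of_forall_compl_eq_zero fun t ht => by rw [hsupp t ht, zero_mul]]
  calc _ ≤ (Mgen m N : ℝ) ^ (1 / p) * Mgen m (s + 1) * μ.real (cyl m N 0) :=
        norm_setIntegral_le_of_norm_le_const (measure_lt_top _ _) hkernel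
    _ = m s * Mgen m s * (Mgen m N : ℝ) ^ (1 / p - 1) := by
        rw [measureReal_def, hμ, ENNReal.toReal_inv, ENNReal.toReal_natCast, Real.rpow_sub hMN,
          Real.rpow_one, Mgen_succ]
        push_cast
        ring
    _ ≤ lam * Mgen m s * ((n : ℝ) + 1) ^ (1 / p - 1) := by
        gcongr
        · exact_mod_cast hlam s
        · exact (Nat.cast_le.2 hn.le).trans (le_add_of_nonneg_right zero_le_one)

/-- If `a` is a `p`-atom supported in `I_N` (`0 < p < 1`), then for every `n > M_N`,
`s < N` and `x ∈ I_s ∖ I_{s+1}`, `|S_n a(x)|/(n+1)^{1/p-1} ≤ λ M_s`. -/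
theorem partial_sum_atom_pointwise_bound
    (m : ℕ → ℕ) (hm : ∀ k, 2 ≤ m k) (lam : ℕ) (hlam : ∀ k, m k ≤ lam)
    (μ : Measure (Gm m)) (hμ : ∀ n x, μ (cyl m n x) = ((Mgen m n : ℝ≥0∞))⁻¹)
    (p : ℝ) (hp0 : 0 < p) (hp1 : p < 1)
    (N : ℕ) (a : Gm m → ℂ) (ha : Measurable a)
    (hsupp : ∀ x ∉ cyl m N 0, a x = 0)
    (hzero : (∫ x in cyl m N 0, a x ∂μ) = 0)
    (hbound : ∀ x, ‖a x‖ ≤ (Mgen m N : ℝ) ^ (1 / p))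
    (n : ℕ) (hn : Mgen m N < n) (s : ℕ) (hs : s < N)
    (x : Gm m) (hx : x ∈ cyl m s 0 \ cyl m (s + 1) 0) :
    ‖Spart m μ a n x‖ / ((n : ℝ) + 1) ^ (1 / p - 1) ≤
      (lam : ℝ) * Mgen m s :=
  partial_sum_atom_pointwise_bound_general m hm lam hlam μ hμ p hp0 hp1 N a ha hsupp hbound n hn s
    hs x hx

end
end
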